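/- arXiv:math/0512460 — 4 statements merged into one kernel-verified Lean document; each statement's English description precedes it below -/
import Mathlib

section
/- Let u be a non-negative subharmonic function defined on an open connected set D ⊆ ℂ and let p > 0. Then there exists a constant C_p depending only on p such that for every z ∈ D and every r > 0 with the closed disc B̄(z,r) ⊆ D, one has u(z)^p ≤ C_p · (1/|B(z,r)|) ∫_{B(z,r)} u(y)^p dy, where |B(z,r)| = πr² is the area of the disc and the integral is with respect to two-dimensional Lebesgue measure. -/
open Set Filter Metric MeasureTheory

noncomputable section

/-- A function `u` is subharmonic on `D ⊆ ℂ` if it is upper semicontinuous on `D` and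
satisfies the sub-mean value inequality on every closed disc contained in `D`. -/
def IsSubharmonicOn (u : ℂ → ℝ) (D : Set ℂ) : Prop :=
  UpperSemicontinuousOn u D ∧
    ∀ (z : ℂ) (ρ : ℝ), 0 < ρ → closedBall z ρ ⊆ D →
      u z ≤ (1 / (2 * Real.pi)) *
        ∫ φ in (0:ℝ)..(2 * Real.pi), u (z + (ρ : ℂ) * Complex.exp ((φ : ℂ) * Complex.I))

/-!
Integrating the circle sub-mean value inequality in polar coordinates gives the area version
`u w ≤ ⨍ y in ball w ρ, u y` on every disc in `D`. For `p ≥ 1` Jensen's inequality finishes the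
proof. For `p ≤ 1` let `M t` be the supremum of `u` on `closedBall z (t * r)`, finite because `u`
is upper semicontinuous. On a disc of radius `(s - t) * r` around a point of
`closedBall z (t * r)` we have `u ≤ (M s) ^ (1 - p) * u ^ p`, so the area inequality and Young's
inequality give `M t ≤ M s / 2 ^ (2 / p + 1) + K * (s - t) ^ (-2 / p)` with
`K ^ p` a multiple of `⨍ y in ball z r, u y ^ p`. Since `M` is bounded, the supremum of
`M t * (1 - t) ^ (2 / p)` absorbs the first term, which gives `u z ≤ M 0 ≤ 2 ^ (2 / p + 1) * K`.
-/

open Real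

lemma rpow_one_sub_mul_le_inv_mul_add {p a X N : ℝ} (hp : 0 < p) (hp1 : p ≤ 1) (ha : 0 ≤ a)
    (hX : 0 ≤ X) (hN : 0 < N) : a ^ (1 - p) * X ≤ N⁻¹ * a + N ^ ((1 - p) / p) * X ^ p⁻¹ := by
  have hamgm := geom_mean_le_arith_mean2_weighted (sub_nonneg.2 hp1) hp.le
    (mul_nonneg (inv_nonneg.2 hN.le) ha) (mul_nonneg (rpow_nonneg hN.le ((1 - p) / p))
    (rpow_nonneg hX p⁻¹)) (sub_add_cancel 1 p)
  have hprod : (N⁻¹ * a) ^ (1 - p) * (N ^ ((1 - p) / p) * X ^ p⁻¹) ^ p = a ^ (1 - p) * X := by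
    rw [mul_rpow (inv_nonneg.2 hN.le) ha, mul_rpow (rpow_nonneg hN.le _) (rpow_nonneg hX _),
      ← rpow_mul hN.le, ← rpow_mul hX, div_mul_cancel₀ _ hp.ne', inv_mul_cancel₀ hp.ne', rpow_one,
      inv_rpow hN.le]
    field_simp [(rpow_pos_of_pos hN (1 - p)).ne']
  rw [hprod] at hamgm
  have h1 : 0 ≤ p * (N⁻¹ * a) := by positivity
  have h2 : 0 ≤ (1 - p) * (N ^ ((1 - p) / p) * X ^ p⁻¹) := mul_nonneg (by linarith) (by positivity)
  linarith

lemma le_rpow_one_sub_mul_rpow {x M p : ℝ} (hp1 : p ≤ 1) (hx : 0 ≤ x) (hxM : x ≤ M) :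
    x ≤ M ^ (1 - p) * x ^ p := by
  calc x = x ^ (1 - p) * x ^ p := by rw [← rpow_add' hx (by norm_num), sub_add_cancel, rpow_one]
    _ ≤ M ^ (1 - p) * x ^ p := by gcongr

lemma le_two_rpow_mul_of_forall_le_inv_mul_add {f : ℝ → ℝ} {q K : ℝ} (hq : 0 ≤ q)
    (hbdd : BddAbove (f '' Ico 0 1))
    (hstep : ∀ t ∈ Ico (0 : ℝ) 1, ∀ s ∈ Ioo t 1,
      f t ≤ (2 ^ (q + 1))⁻¹ * f s + K * (s - t) ^ (-q)) :
    f 0 ≤ 2 ^ (q + 1) * K := by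
  -- The supremum `S` of `f t * (1 - t) ^ q` over `[0, 1)` satisfies `S ≤ S / 2 + 2 ^ q * K`.
  set h : ℝ → ℝ := fun t => f t * (1 - t) ^ q with h_def
  obtain ⟨B, hB⟩ := hbdd
  have hbdd : BddAbove (h '' Ico 0 1) := by
    refine ⟨max B 0, forall_mem_image.2 fun t ht => ?_⟩
    have hc0 : 0 ≤ (1 - t) ^ q := rpow_nonneg (by linarith [ht.2]) q
    have hc1 : (1 - t) ^ q ≤ 1 := rpow_le_one (by linarith [ht.2]) (by linarith [ht.1]) hq
    calc h t ≤ max (f t) 0 * (1 - t) ^ q := mul_le_mul_of_nonneg_right (le_max_left _ _) hc0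
      _ ≤ max B 0 * (1 - t) ^ q := by gcongr; exact hB (mem_image_of_mem f ht)
      _ ≤ max B 0 := mul_le_of_le_one_right (le_max_right _ _) hc1
  set S := sSup (h '' Ico 0 1)
  have hhalf : ∀ t ∈ Ico (0 : ℝ) 1, h t ≤ S / 2 + 2 ^ q * K := by
    intro t ht
    set a := (1 - t) / 2 with ha
    have ha0 : 0 < a := by linarith [ht.2]
    have hs : 1 - a ∈ Ioo t 1 := ⟨by linarith, by linarith⟩
    have hhs : h (1 - a) ≤ S := le_csSup hbdd (mem_image_of_mem h ⟨by linarith [ht.1], hs.2⟩)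
    have hstep' := hstep t ht (1 - a) hs
    rw [show 1 - a - t = a by ring] at hstep'
    have hpow : (2 * a) ^ q = 2 ^ q * a ^ q := mul_rpow (by norm_num) ha0.le
    have hneg : a ^ (-q) * a ^ q = 1 := by
      rw [rpow_neg ha0.le, inv_mul_cancel₀ (rpow_pos_of_pos ha0 q).ne']
    have h2 : (2 : ℝ) ^ (q + 1) = 2 ^ q * 2 := rpow_add_one (by norm_num) q
    have h2q : (0 : ℝ) < 2 ^ q := rpow_pos_of_pos (by norm_num) q
    calc h t = f t * (2 ^ q * a ^ q) := by simp only [h_def, show 1 - t = 2 * a by ring, hpow]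
      _ ≤ ((2 ^ (q + 1))⁻¹ * f (1 - a) + K * a ^ (-q)) * (2 ^ q * a ^ q) := by gcongr
      _ = h (1 - a) / 2 + 2 ^ q * K * (a ^ (-q) * a ^ q) := by
        simp only [h_def, sub_sub_cancel, h2]; field_simp
      _ ≤ S / 2 + 2 ^ q * K := by rw [hneg]; linarith
  have hS : S ≤ 2 ^ (q + 1) * K := by
    have := csSup_le (nonempty_Ico.2 one_pos |>.image h) (forall_mem_image.2 hhalf)
    rw [rpow_add_one (by norm_num)]
    linarith
  calc f 0 = h 0 := by simp [h_def]
    _ ≤ S := le_csSup hbdd (mem_image_of_mem h ⟨le_rfl, one_pos⟩)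
    _ ≤ 2 ^ (q + 1) * K := hS

section Measurability

variable {α : Type*} [MeasurableSpace α]

theorem UpperSemicontinuousOn.measurable_indicator [TopologicalSpace α] [OpensMeasurableSpace α]
    {u : α → ℝ} {s : Set α} (hu : UpperSemicontinuousOn u s) (hs : MeasurableSet s) :
    Measurable (s.indicator u) := by
  refine measurable_of_restrict_of_restrict_compl hs ?_ ?_
  · have : s.domRestrict (s.indicator u) = s.domRestrict u :=
      funext fun x => indicator_of_mem x.2 u
    rw [this]
    exact (upperSemicontinuousOn_iff_restrict.2 hu).measurable
  · have : sᶜ.domRestrict (s.indicator u) = fun _ => 0 :=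
      funext fun x => indicator_of_notMem x.2 u
    rw [this]
    exact measurable_const

theorem UpperSemicontinuousOn.aemeasurable_restrict [TopologicalSpace α] [OpensMeasurableSpace α]
    {μ : Measure α} {u : α → ℝ} {s : Set α} (hu : UpperSemicontinuousOn u s)
    (hs : MeasurableSet s) : AEMeasurable u (μ.restrict s) :=
  (aemeasurable_indicator_iff hs).1 (hu.measurable_indicator hs).aemeasurable

theorem integrableOn_rpow_of_bddAbove {μ : Measure α} {u : α → ℝ} {s : Set α}
    (hsm : MeasurableSet s) (hs : μ s ≠ ⊤) (hmeas : AEMeasurable u (μ.restrict s))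
    (hu0 : ∀ y ∈ s, 0 ≤ u y) (hbdd : BddAbove (u '' s)) {p : ℝ} (hp : 0 ≤ p) :
    IntegrableOn (fun y => u y ^ p) s μ := by
  obtain ⟨B, hB⟩ := hbdd
  refine ⟨(hmeas.pow_const p).aestronglyMeasurable,
    .restrict_of_bounded (C := B ^ p) hs.lt_top ?_⟩
  filter_upwards [ae_restrict_mem hsm] with y hy
  rw [Real.norm_of_nonneg (rpow_nonneg (hu0 y hy) p)]
  exact rpow_le_rpow (hu0 y hy) (hB (mem_image_of_mem u hy)) hp

end Measurability

section Polar

variable {E : Type*} [NormedAddCommGroup E] [NormedSpace ℝ E]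

theorem Complex.setAverage_ball (f : ℂ → E) (c : ℂ) (r : ℝ) :
    ⨍ y in ball c r, f y = (π * r ^ 2)⁻¹ • ∫ y in ball c r, f y := by
  rcases le_or_gt r 0 with hr | hr
  · simp [ball_eq_empty.2 hr]
  · rw [setAverage_eq, measureReal_def, Complex.volume_ball, ENNReal.toReal_mul,
      ENNReal.toReal_pow, ENNReal.toReal_ofReal hr.le, ENNReal.coe_toReal, NNReal.coe_real_pi,
      mul_comm]

lemma circleMap_mem_ball_iff {c : ℂ} {s ρ : ℝ} (θ : ℝ) (hs : 0 ≤ s) :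
    circleMap c s θ ∈ ball c ρ ↔ s < ρ := by
  rw [mem_ball, dist_eq_norm, circleMap_sub_center, norm_circleMap_zero, abs_of_nonneg hs]

theorem setIntegral_ball_eq_setIntegral_polar (g : ℂ → E) (c : ℂ) (ρ : ℝ) :
    ∫ y in ball c ρ, g y = ∫ p in Ioo 0 ρ ×ˢ Ioo (-π) π, p.1 • g (circleMap c p.1 p.2) := by
  have hsymm (p : ℝ × ℝ) : c + Complex.polarCoord.symm p = circleMap c p.1 p.2 := by
    rw [Complex.polarCoord_symm_apply, circleMap, Complex.exp_mul_I, ← Complex.ofReal_cos,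
      ← Complex.ofReal_sin]
  calc ∫ y in ball c ρ, g y = ∫ w, (ball c ρ).indicator g (c + w) := by
        rw [integral_add_left_eq_self, integral_indicator measurableSet_ball]
    _ = ∫ p in polarCoord.target,
          p.1 • (ball c ρ).indicator g (c + Complex.polarCoord.symm p) :=
        (Complex.integral_comp_polarCoord_symm _).symm
    _ = ∫ p in polarCoord.target,
          (Iio ρ ×ˢ univ).indicator (fun p => p.1 • g (circleMap c p.1 p.2)) p := by
        refine setIntegral_congr_fun polarCoord.open_target.measurableSet fun p hp => ?_
        have hp : 0 < p.1 := by rw [polarCoord_target] at hp; exact hp.1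
        by_cases hρ : p.1 < ρ
        · rw [hsymm, indicator_of_mem ((circleMap_mem_ball_iff _ hp.le).2 hρ),
            indicator_of_mem (by simpa using hρ)]
        · rw [hsymm, indicator_of_notMem (mt (circleMap_mem_ball_iff _ hp.le).1 hρ),
            indicator_of_notMem (by simpa using hρ), smul_zero]
    _ = ∫ p in Ioo 0 ρ ×ˢ Ioo (-π) π, p.1 • g (circleMap c p.1 p.2) := by
        rw [setIntegral_indicator (measurableSet_Iio.prod MeasurableSet.univ), polarCoord_target,
          prod_inter_prod, Ioi_inter_Iio, inter_univ]

theorem setIntegral_Ioo_circleMap (g : ℂ → E) (c : ℂ) (s : ℝ) :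
    ∫ θ in Ioo (-π) π, g (circleMap c s θ) = (2 * π) • circleAverage g c s := by
  rw [circleAverage_eq_integral_add (-π), smul_inv_smul₀ two_pi_pos.ne',
    intervalIntegral.integral_comp_add_right (fun θ => g (circleMap c s θ)),
    intervalIntegral.integral_of_le (by linarith [pi_pos]), integral_Ioc_eq_integral_Ioo]
  ring_nf

end Polar

theorem mul_le_setIntegral_ball_of_le_circleAverage {g : ℂ → ℝ} {c : ℂ} {ρ a M : ℝ}
    (hρ : 0 ≤ ρ) (hg : Measurable g) (hgM : ∀ y ∈ ball c ρ, ‖g y‖ ≤ M)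
    (ha : ∀ s ∈ Ioo 0 ρ, a ≤ circleAverage g c s) :
    π * ρ ^ 2 * a ≤ ∫ y in ball c ρ, g y := by
  set F : ℝ × ℝ → ℝ := fun p => p.1 * g (circleMap c p.1 p.2)
  have hF : IntegrableOn F (Ioo 0 ρ ×ˢ Ioo (-π) π) := by
    refine Measure.integrableOn_of_bounded (M := ρ * M) ?_ ?_ ?_
    · rw [Measure.volume_eq_prod, Measure.prod_prod]
      exact ENNReal.mul_ne_top measure_Ioo_lt_top.ne measure_Ioo_lt_top.ne
    · exact (measurable_fst.mul (hg.comp circleMap.continuous.measurable)).aestronglyMeasurable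
    · filter_upwards [ae_restrict_mem (measurableSet_Ioo.prod measurableSet_Ioo)]
        with p ⟨⟨hp0, hpρ⟩, _⟩
      rw [norm_mul, Real.norm_of_nonneg hp0.le]
      exact mul_le_mul hpρ.le (hgM _ ((circleMap_mem_ball_iff _ hp0.le).2 hpρ)) (norm_nonneg _) hρ
  have hradial : IntegrableOn (fun s => ∫ θ in Ioo (-π) π, F (s, θ)) (Ioo 0 ρ) := by
    rw [IntegrableOn, Measure.volume_eq_prod, ← Measure.prod_restrict] at hF
    exact hF.integral_prod_left
  calc π * ρ ^ 2 * a = ∫ s in Ioo 0 ρ, s * (2 * π * a) := by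
        rw [integral_mul_const, ← integral_Ioc_eq_integral_Ioo,
          ← intervalIntegral.integral_of_le hρ, integral_id]
        ring
    _ ≤ ∫ s in Ioo 0 ρ, ∫ θ in Ioo (-π) π, F (s, θ) := by
        refine setIntegral_mono_on ?_ hradial measurableSet_Ioo fun s hs => ?_
        · exact (continuous_id.mul continuous_const).integrableOn_Icc.mono_set Ioo_subset_Icc_self
        · rw [integral_const_mul, setIntegral_Ioo_circleMap, smul_eq_mul]
          gcongr
          · exact hs.1.le
          · exact ha s hs
    _ = ∫ p in Ioo 0 ρ ×ˢ Ioo (-π) π, F p := by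
        rw [Measure.volume_eq_prod, setIntegral_prod F (by rwa [← Measure.volume_eq_prod])]
    _ = ∫ y in ball c ρ, g y := (setIntegral_ball_eq_setIntegral_polar g c ρ).symm

def HasSubMeanValueOnDiscs (u : ℂ → ℝ) (K : Set ℂ) : Prop :=
  ∀ w ρ, 0 < ρ → closedBall w ρ ⊆ K → u w ≤ ⨍ y in ball w ρ, u y

namespace IsSubharmonicOn

variable {u : ℂ → ℝ} {D : Set ℂ}

theorem le_circleAverage (hu : IsSubharmonicOn u D) {c : ℂ} {ρ : ℝ} (hρ : 0 < ρ)
    (hB : closedBall c ρ ⊆ D) : u c ≤ circleAverage u c ρ := by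
  simpa only [circleAverage, circleMap, one_div, smul_eq_mul] using hu.2 c ρ hρ hB

theorem hasSubMeanValueOnDiscs (hu : IsSubharmonicOn u D) (hu0 : ∀ y ∈ D, 0 ≤ u y) :
    HasSubMeanValueOnDiscs u D := by
  intro c ρ hρ hB
  have husc := hu.1.mono hB
  obtain ⟨M, hM⟩ := husc.bddAbove_of_isCompact (isCompact_closedBall c ρ)
  -- a measurable stand-in for `u`, equal to it on every circle inside `closedBall c ρ`
  set g := (closedBall c ρ).indicator u
  have hgu : EqOn g u (closedBall c ρ) := fun y hy => indicator_of_mem hy u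
  have harea : π * ρ ^ 2 * u c ≤ ∫ y in ball c ρ, g y := by
    refine mul_le_setIntegral_ball_of_le_circleAverage (M := M) hρ.le
      (husc.measurable_indicator measurableSet_closedBall) (fun y hy => ?_) fun s hs => ?_
    · have hy' := ball_subset_closedBall hy
      rw [hgu hy', Real.norm_of_nonneg (hu0 y (hB hy'))]
      exact hM (mem_image_of_mem u hy')
    · have hsρ : closedBall c s ⊆ closedBall c ρ := closedBall_subset_closedBall hs.2.le
      rw [circleAverage_congr_sphere (hgu.mono (sphere_subset_closedBall.trans
        (by rwa [abs_of_pos hs.1])))]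
      exact hu.le_circleAverage hs.1 (hsρ.trans hB)
  rw [setIntegral_congr_fun measurableSet_ball (hgu.mono ball_subset_closedBall)] at harea
  rwa [Complex.setAverage_ball, smul_eq_mul, le_inv_mul_iff₀ (by positivity)]

end IsSubharmonicOn

section SubMeanValue

variable {u : ℂ → ℝ} {z : ℂ} {r p : ℝ}

theorem setAverage_ball_rpow_nonneg (hu0 : ∀ y ∈ closedBall z r, 0 ≤ u y) :
    0 ≤ ⨍ y in ball z r, u y ^ p := by
  rw [Complex.setAverage_ball, smul_eq_mul]
  exact mul_nonneg (by positivity) (setIntegral_nonneg measurableSet_ball fun y hy =>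
    rpow_nonneg (hu0 y (ball_subset_closedBall hy)) p)

theorem le_rpow_mul_setAverage_rpow {w : ℂ} {t s m : ℝ} (hp1 : p ≤ 1) (hr : 0 < r)
    (hts : t < s) (hs1 : s ≤ 1) (hw : w ∈ closedBall z (t * r))
    (hu0 : ∀ y ∈ closedBall z r, 0 ≤ u y) (hint : IntegrableOn (fun y => u y ^ p) (ball z r))
    (hmean : HasSubMeanValueOnDiscs u (closedBall z r))
    (hm : ∀ y ∈ closedBall z (s * r), u y ≤ m) :
    u w ≤ m ^ (1 - p) * (((s - t) ^ 2)⁻¹ * ⨍ y in ball z r, u y ^ p) := by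
  set ρ := (s - t) * r
  have hρ : 0 < ρ := mul_pos (sub_pos.2 hts) hr
  have hdist : ρ + dist w z ≤ s * r := by
    have := mem_closedBall.1 hw
    linarith
  have hsr : s * r ≤ r := mul_le_of_le_one_left hr.le hs1
  have hcb : closedBall w ρ ⊆ closedBall z (s * r) := closedBall_subset_closedBall' hdist
  have hball : ball w ρ ⊆ ball z r := (ball_subset_ball' hdist).trans (ball_subset_ball hsr)
  have hwρ : w ∈ closedBall z (s * r) := hcb (mem_closedBall_self hρ.le)
  have hm0 : 0 ≤ m := (hu0 w (closedBall_subset_closedBall hsr hwρ)).trans (hm w hwρ)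
  have hpow0 : ∀ᵐ y ∂volume.restrict (ball z r), 0 ≤ u y ^ p := by
    filter_upwards [ae_restrict_mem measurableSet_ball] with y hy
    exact rpow_nonneg (hu0 y (ball_subset_closedBall hy)) p
  calc u w ≤ (π * ρ ^ 2)⁻¹ * ∫ y in ball w ρ, u y := by
        rw [← smul_eq_mul, ← Complex.setAverage_ball]
        exact hmean w ρ hρ (hcb.trans (closedBall_subset_closedBall hsr))
    _ ≤ (π * ρ ^ 2)⁻¹ * ∫ y in ball w ρ, m ^ (1 - p) * u y ^ p := by
        refine mul_le_mul_of_nonneg_left ?_ (by positivity)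
        refine integral_mono_of_nonneg ?_ ((hint.mono_set hball).const_mul _) ?_ <;>
          filter_upwards [ae_restrict_mem measurableSet_ball] with y hy
        · exact hu0 y (ball_subset_closedBall (hball hy))
        · exact le_rpow_one_sub_mul_rpow hp1 (hu0 y (ball_subset_closedBall (hball hy)))
            (hm y (hcb (ball_subset_closedBall hy)))
    _ ≤ (π * ρ ^ 2)⁻¹ * (m ^ (1 - p) * ∫ y in ball z r, u y ^ p) := by
        rw [integral_const_mul]
        gcongr
    _ = m ^ (1 - p) * (((s - t) ^ 2)⁻¹ * ⨍ y in ball z r, u y ^ p) := by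
        rw [Complex.setAverage_ball, smul_eq_mul,
          show π * ρ ^ 2 = (s - t) ^ 2 * (π * r ^ 2) by ring, mul_inv]
        ring

theorem sSup_image_closedBall_le {t s N : ℝ} (hp : 0 < p) (hp1 : p ≤ 1) (hr : 0 < r)
    (ht : 0 ≤ t) (hts : t < s) (hs1 : s ≤ 1) (hN : 0 < N)
    (hu0 : ∀ y ∈ closedBall z r, 0 ≤ u y) (hbdd : BddAbove (u '' closedBall z r))
    (hint : IntegrableOn (fun y => u y ^ p) (ball z r))
    (hmean : HasSubMeanValueOnDiscs u (closedBall z r)) :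
    sSup (u '' closedBall z (t * r)) ≤ N⁻¹ * sSup (u '' closedBall z (s * r)) +
      N ^ ((1 - p) / p) * (⨍ y in ball z r, u y ^ p) ^ p⁻¹ * (s - t) ^ (-(2 / p)) := by
  have hA := setAverage_ball_rpow_nonneg (p := p) hu0
  have hst : 0 < s - t := sub_pos.2 hts
  set Ms := sSup (u '' closedBall z (s * r))
  have hle : ∀ y ∈ closedBall z (s * r), u y ≤ Ms := fun y hy =>
    le_csSup (hbdd.mono (image_mono (closedBall_subset_closedBall
      (mul_le_of_le_one_left hr.le hs1)))) (mem_image_of_mem u hy)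
  have hMs : 0 ≤ Ms := (hu0 z (mem_closedBall_self hr.le)).trans
    (hle z (mem_closedBall_self (mul_nonneg (ht.trans hts.le) hr.le)))
  refine csSup_le ⟨u z, mem_image_of_mem u (mem_closedBall_self (by positivity))⟩
    (forall_mem_image.2 fun w hw => ?_)
  calc u w ≤ Ms ^ (1 - p) * (((s - t) ^ 2)⁻¹ * ⨍ y in ball z r, u y ^ p) :=
        le_rpow_mul_setAverage_rpow hp1 hr hts hs1 hw hu0 hint hmean hle
    _ ≤ N⁻¹ * Ms + N ^ ((1 - p) / p) * (((s - t) ^ 2)⁻¹ * ⨍ y in ball z r, u y ^ p) ^ p⁻¹ :=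
        rpow_one_sub_mul_le_inv_mul_add hp hp1 hMs (by positivity) hN
    _ = _ := by
        rw [mul_rpow (by positivity) hA, ← rpow_natCast, ← rpow_neg hst.le, ← rpow_mul hst.le]
        ring_nf

theorem rpow_le_two_rpow_mul_setAverage_rpow (hp : 0 < p) (hp1 : p ≤ 1) (hr : 0 < r)
    (hu0 : ∀ y ∈ closedBall z r, 0 ≤ u y) (hbdd : BddAbove (u '' closedBall z r))
    (hint : IntegrableOn (fun y => u y ^ p) (ball z r))
    (hmean : HasSubMeanValueOnDiscs u (closedBall z r)) :
    u z ^ p ≤ 2 ^ (2 / p + 1) * ⨍ y in ball z r, u y ^ p := by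
  have hA := setAverage_ball_rpow_nonneg (p := p) hu0
  set A := ⨍ y in ball z r, u y ^ p
  set N : ℝ := 2 ^ (2 / p + 1)
  have hN : 0 < N := by positivity
  set M : ℝ → ℝ := fun t => sSup (u '' closedBall z (t * r))
  have hbddM : BddAbove (M '' Ico 0 1) := by
    obtain ⟨B, hB⟩ := hbdd
    refine ⟨B, forall_mem_image.2 fun t ht => csSup_le
      ⟨u z, mem_image_of_mem u (mem_closedBall_self (mul_nonneg ht.1 hr.le))⟩
      (forall_mem_image.2 fun y hy => hB (mem_image_of_mem u ?_))⟩
    exact closedBall_subset_closedBall (mul_le_of_le_one_left hr.le ht.2.le) hy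
  have hM0 : M 0 ≤ (N * A) ^ p⁻¹ := by
    have hexp : p⁻¹ = 1 + (1 - p) / p := by field_simp; ring
    have h : M 0 ≤ N * (N ^ ((1 - p) / p) * A ^ p⁻¹) :=
      le_two_rpow_mul_of_forall_le_inv_mul_add (by positivity) hbddM fun t ht s hs =>
        sSup_image_closedBall_le hp hp1 hr ht.1 hs.1 hs.2.le hN hu0 hbdd hint hmean
    rwa [← mul_assoc, ← rpow_one_add' hN.le (hexp ▸ inv_ne_zero hp.ne'), ← hexp,
      ← mul_rpow hN.le hA] at h
  have huM : u z ≤ M 0 := le_csSup (hbdd.mono (image_mono (closedBall_subset_closedBall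
    (by simpa using hr.le)))) (mem_image_of_mem u (mem_closedBall_self (by simp)))
  calc u z ^ p ≤ ((N * A) ^ p⁻¹) ^ p :=
        rpow_le_rpow (hu0 z (mem_closedBall_self hr.le)) (huM.trans hM0) hp.le
    _ = N * A := rpow_inv_rpow (by positivity) hp.ne'

theorem exists_rpow_le_mul_setAverage_rpow (hp : 0 < p) :
    ∃ C : ℝ, ∀ (u : ℂ → ℝ) (z : ℂ) (r : ℝ), 0 < r → (∀ y ∈ closedBall z r, 0 ≤ u y) →
      BddAbove (u '' closedBall z r) → AEMeasurable u (volume.restrict (closedBall z r)) →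
      HasSubMeanValueOnDiscs u (closedBall z r) → u z ^ p ≤ C * ⨍ y in ball z r, u y ^ p := by
  have hint {u : ℂ → ℝ} {z : ℂ} {r q : ℝ} (hq : 0 ≤ q) (hu0 : ∀ y ∈ closedBall z r, 0 ≤ u y)
      (hbdd : BddAbove (u '' closedBall z r))
      (hmeas : AEMeasurable u (volume.restrict (closedBall z r))) :
      IntegrableOn (fun y => u y ^ q) (ball z r) :=
    (integrableOn_rpow_of_bddAbove measurableSet_closedBall
      (isCompact_closedBall z r).measure_lt_top.ne hmeas hu0 hbdd hq).mono_set
      ball_subset_closedBall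
  rcases le_total p 1 with hp1 | hp1
  · exact ⟨_, fun u z r hr hu0 hbdd hmeas hmean => rpow_le_two_rpow_mul_setAverage_rpow hp hp1 hr
      hu0 hbdd (hint hp.le hu0 hbdd hmeas) hmean⟩
  · refine ⟨1, fun u z r hr hu0 hbdd hmeas hmean => ?_⟩
    have hu1 : IntegrableOn u (ball z r) := by simpa using hint zero_le_one hu0 hbdd hmeas
    calc u z ^ p ≤ (⨍ y in ball z r, u y) ^ p :=
          rpow_le_rpow (hu0 z (mem_closedBall_self hr.le)) (hmean z r hr subset_rfl) hp.le
      _ ≤ ⨍ y in ball z r, u y ^ p :=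
          (convexOn_rpow hp1).map_set_average_le (continuous_rpow_const hp.le).continuousOn
            isClosed_Ici (measure_ball_pos volume z hr).ne' measure_ball_lt_top.ne
            ((ae_restrict_mem measurableSet_ball).mono fun y hy =>
              hu0 y (ball_subset_closedBall hy)) hu1 (hint hp.le hu0 hbdd hmeas)
      _ = 1 * ⨍ y in ball z r, u y ^ p := (one_mul _).symm

end SubMeanValue

/-- **Mean value inequality for powers of non-negative subharmonic functions.** For every
`p > 0` there is a constant `C_p`, depending only on `p`, such that every non-negative
subharmonic function `u` on an open connected set `D ⊆ ℂ` satisfies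
`u(z)^p ≤ C_p ⬝ (1/|B(z,r)|) ∫_{B(z,r)} u^p` whenever the closed disc `B̄(z,r) ⊆ D`. -/
theorem subharmonic_mean_value_inequality (p : ℝ) (hp : 0 < p) :
    ∃ C : ℝ, ∀ (D : Set ℂ), IsOpen D → IsConnected D →
      ∀ u : ℂ → ℝ, IsSubharmonicOn u D → (∀ z ∈ D, 0 ≤ u z) →
        ∀ (z : ℂ) (r : ℝ), 0 < r → closedBall z r ⊆ D →
          u z ^ p ≤ C * ((Real.pi * r ^ 2)⁻¹ * ∫ y in ball z r, u y ^ p) := by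
  obtain ⟨C, hC⟩ := exists_rpow_le_mul_setAverage_rpow hp
  refine ⟨C, fun D _ _ u hu hu0 z r hr hB => ?_⟩
  have husc : UpperSemicontinuousOn u (closedBall z r) := hu.1.mono hB
  rw [← smul_eq_mul (π * r ^ 2)⁻¹, ← Complex.setAverage_ball]
  exact hC u z r hr (fun y hy => hu0 y (hB hy))
    (husc.bddAbove_of_isCompact (isCompact_closedBall z r))
    (husc.aemeasurable_restrict measurableSet_closedBall)
    fun w ρ hρ hwρ => hu.hasSubMeanValueOnDiscs hu0 w ρ hρ (hwρ.trans hB)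
end
end

section
/- Let U ⊆ ℂ be an open neighbourhood of the closed unit disc and let u : U ∖ {0} → [0,∞) be a subharmonic function. Assume that for some constants C > 0 and m ≥ 0 one has u(z) ≤ C |Im z|^{-m} for all z in the open unit disc with z ≠ 0. Then there exists a constant C' > 0 such that u(z) ≤ C' |z|^{-m} for all z in the open unit disc with z ≠ 0. (A variant of Domar's lemma.) -/
open Set Filter Metric MeasureTheory

noncomputable section

/-! Domar's iteration. Suppose `u(z₀) ≥ M` and `u ≤ C |Im w|^{-m} ≤ M/2` off the strip
`|Im w| ≤ δ`, where `M = 2 C δ^{-m}`. The circle of radius `36 δ` around `z₀` meets that strip in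
an arc of angular measure at most `π/2`, so the sub-mean value inequality forces `u ≥ 2M` somewhere
on the circle. Iterating, the values of `u` double while the radii shrink by the factor
`q = 2^{-1/m}`; starting from a point `z` with `u(z) > C' |z|^{-m}` the iterates stay in the disc
`B̄(z, |z|/2)`, where `u` is bounded by upper semicontinuity. Near the unit circle, `u` is bounded
on the compact annulus `1/2 ≤ |z| ≤ 1`. -/

section

open Real

theorem IsSubharmonicOn.mono {u : ℂ → ℝ} {D D' : Set ℂ} (hu : IsSubharmonicOn u D)
    (h : D' ⊆ D) : IsSubharmonicOn u D' :=
  ⟨hu.1.mono h, fun z ρ hρ hball => hu.2 z ρ hρ (hball.trans h)⟩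

theorem Real.two_mul_sq_div_pi_le_sin_sub_sin {x y : ℝ} (hyx : y ≤ x) (hy : -(π / 2) ≤ y)
    (hx : x ≤ π / 2) : 2 * ((x - y) / π) ^ 2 ≤ sin x - sin y := by
  have hs : (x - y) / π ≤ sin ((x - y) / 2) := by
    have := mul_le_sin (x := (x - y) / 2) (by linarith) (by linarith)
    calc (x - y) / π = 2 / π * ((x - y) / 2) := by ring
      _ ≤ _ := this
  have hcs : sin ((x - y) / 2) ≤ cos ((x + y) / 2) := by
    rw [← cos_pi_div_two_sub, ← cos_abs ((x + y) / 2)]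
    exact cos_le_cos_of_nonneg_of_le_pi (abs_nonneg _) (by linarith)
      (abs_le.2 ⟨by linarith, by linarith⟩)
  have hπ : 0 ≤ (x - y) / π := div_nonneg (by linarith) pi_pos.le
  rw [sin_sub_sin]
  nlinarith

theorem Real.two_mul_sq_div_pi_le_abs_sin_sub_sin {x y : ℝ} (hx : x ∈ Icc (-(π / 2)) (π / 2))
    (hy : y ∈ Icc (-(π / 2)) (π / 2)) : 2 * ((x - y) / π) ^ 2 ≤ |sin x - sin y| := by
  rcases le_total y x with hyx | hxy
  · exact (two_mul_sq_div_pi_le_sin_sub_sin hyx hy.1 hx.2).trans (le_abs_self _)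
  · rw [abs_sub_comm, ← neg_sub, neg_div, neg_sq]
    exact (two_mul_sq_div_pi_le_sin_sub_sin hxy hx.1 hy.2).trans (le_abs_self _)

theorem Real.abs_sub_le_of_abs_sin_sub_sin_le {x y η : ℝ} (hx : x ∈ Icc (-(π / 2)) (π / 2))
    (hy : y ∈ Icc (-(π / 2)) (π / 2)) (h : |sin x - sin y| ≤ 2 * η) : |x - y| ≤ π * √η := by
  have hsq : ((x - y) / π) ^ 2 ≤ η := by
    linarith [two_mul_sq_div_pi_le_abs_sin_sub_sin hx hy]
  have := abs_le_sqrt hsq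
  rwa [abs_div, abs_of_pos pi_pos, div_le_iff₀ pi_pos, mul_comm] at this

theorem Real.volume_inter_Ioc_le_of_abs_sin_sub_sin_le {S : Set ℝ} {η : ℝ}
    (hS : ∀ x ∈ S, ∀ y ∈ S, |sin x - sin y| ≤ 2 * η) :
    volume (S ∩ Ioc 0 (2 * π)) ≤ ENNReal.ofReal (3 * π * √η) := by
  set I := Icc (-(π / 2)) (π / 2)
  -- The three pieces of `(0, 2π]` used below are moved into `I` by isometries commuting with `sin`.
  have hpiece : ∀ (J : Set ℝ) (f : ℝ → ℝ), MapsTo f J I → (∀ φ, sin (f φ) = sin φ) →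
      (∀ x y, |f x - f y| = |x - y|) → volume (S ∩ J) ≤ ENNReal.ofReal (π * √η) := by
    intro J f hJ hf hfd
    refine (volume_le_diam _).trans <| Metric.ediam_le fun x hx y hy => ?_
    rw [edist_dist, dist_eq, ← hfd]
    refine ENNReal.ofReal_le_ofReal (abs_sub_le_of_abs_sin_sub_sin_le (hJ hx.2) (hJ hy.2) ?_)
    rw [hf, hf]
    exact hS x hx.1 y hy.1
  have hcover : S ∩ Ioc 0 (2 * π) ⊆
      S ∩ I ∪ S ∩ Icc (π / 2) (3 * π / 2) ∪ S ∩ Icc (3 * π / 2) (2 * π) := by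
    rintro φ ⟨hφS, hφ0, hφ2⟩
    rcases le_total φ (π / 2) with h | h
    · exact Or.inl (Or.inl ⟨hφS, by linarith [pi_pos], h⟩)
    rcases le_total φ (3 * π / 2) with h' | h'
    · exact Or.inl (Or.inr ⟨hφS, h, h'⟩)
    · exact Or.inr ⟨hφS, h', hφ2⟩
  calc volume (S ∩ Ioc 0 (2 * π))
      ≤ volume (S ∩ I) + volume (S ∩ Icc (π / 2) (3 * π / 2))
          + volume (S ∩ Icc (3 * π / 2) (2 * π)) :=
        (measure_mono hcover).trans <| (measure_union_le _ _).trans <|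
          add_le_add_left (measure_union_le _ _) _
    _ ≤ ENNReal.ofReal (π * √η) + ENNReal.ofReal (π * √η) + ENNReal.ofReal (π * √η) := by
        gcongr
        · exact hpiece I id (mapsTo_id _) (fun _ => rfl) (fun _ _ => rfl)
        · exact hpiece _ (fun φ => π - φ)
            (fun φ hφ => ⟨by linarith [hφ.2], by linarith [hφ.1]⟩) (fun φ => sin_pi_sub φ)
            (fun x y => by rw [← abs_neg]; ring_nf)
        · exact hpiece _ (fun φ => φ - 2 * π)
            (fun φ hφ => ⟨by linarith [hφ.1], by linarith [hφ.2, pi_pos]⟩)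
            (fun φ => sin_sub_two_pi φ) (fun x y => by ring_nf)
    _ = ENNReal.ofReal (3 * π * √η) := by
        have : 0 ≤ π * √η := by positivity
        rw [← ENNReal.ofReal_add this this, ← ENNReal.ofReal_add (by positivity) this]
        ring_nf

theorem Real.volume_setOf_abs_add_mul_sin_le_le {a r δ : ℝ} (hr : 0 < r) :
    volume ({φ | |a + r * sin φ| ≤ δ} ∩ Ioc 0 (2 * π)) ≤ ENNReal.ofReal (3 * π * √(δ / r)) := by
  refine volume_inter_Ioc_le_of_abs_sin_sub_sin_le fun x hx y hy => ?_
  have hdiff : |(a + r * sin x) - (a + r * sin y)| = r * |sin x - sin y| := by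
    rw [show a + r * sin x - (a + r * sin y) = r * (sin x - sin y) by ring, abs_mul,
      abs_of_pos hr]
  rw [mul_div_assoc', le_div_iff₀ hr, mul_comm, ← hdiff]
  linarith [abs_sub (a + r * sin x) (a + r * sin y), hx.out, hy.out]

theorem IsSubharmonicOn.le_of_le_add_indicator {u : ℂ → ℝ} {D : Set ℂ} {z₀ : ℂ} {ρ a b V : ℝ}
    {s : Set ℝ} (hu : IsSubharmonicOn u D) (hρ : 0 < ρ) (hball : closedBall z₀ ρ ⊆ D)
    (hs : MeasurableSet s) (ha : 0 ≤ a) (hb : 0 ≤ b) (hV : volume.real (s ∩ Ioc 0 (2 * π)) ≤ V)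
    (hle : ∀ φ : ℝ, u (z₀ + ρ * Complex.exp (φ * Complex.I)) ≤ a + s.indicator (fun _ => b) φ) :
    u z₀ ≤ a + b * V / (2 * π) := by
  have hπ := pi_pos
  have hmean := hu.2 z₀ ρ hρ hball
  by_cases hint : IntervalIntegrable (fun φ : ℝ => u (z₀ + ρ * Complex.exp (φ * Complex.I)))
    volume 0 (2 * π)
  · have hind : IntegrableOn (s.indicator fun _ => b) (Ioc 0 (2 * π)) :=
      (integrable_const _).indicator hs
    have hgi : IntervalIntegrable (fun φ => a + s.indicator (fun _ => b) φ) volume 0 (2 * π) :=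
      (intervalIntegrable_iff_integrableOn_Ioc_of_le (by positivity)).2
        ((integrable_const _).add hind)
    have hgint : ∫ φ in (0 : ℝ)..(2 * π), (a + s.indicator (fun _ => b) φ)
        = 2 * π * a + volume.real (s ∩ Ioc 0 (2 * π)) * b := by
      rw [intervalIntegral.integral_of_le (by positivity),
        integral_add (integrable_const _) hind, setIntegral_const,
        integral_indicator_const _ hs, measureReal_restrict_apply hs, Real.volume_real_Ioc]
      simp [smul_eq_mul, hπ.le]
    calc u z₀ ≤ 1 / (2 * π) * ∫ φ in (0 : ℝ)..(2 * π), (a + s.indicator (fun _ => b) φ) :=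
          hmean.trans <| by
            gcongr
            exact intervalIntegral.integral_mono_on (by positivity) hint hgi fun φ _ => hle φ
      _ ≤ 1 / (2 * π) * (2 * π * a + V * b) := by rw [hgint]; gcongr
      _ = a + b * V / (2 * π) := by field_simp
  · rw [intervalIntegral.integral_undef hint, mul_zero] at hmean
    have : 0 ≤ V := measureReal_nonneg.trans hV
    exact hmean.trans (by positivity)

theorem IsSubharmonicOn.exists_two_mul_le_on_sphere {u : ℂ → ℝ} {D : Set ℂ} {z₀ : ℂ} {δ M : ℝ}
    (hu : IsSubharmonicOn u D) (hδ : 0 < δ) (hM : 0 < M) (hball : closedBall z₀ (36 * δ) ⊆ D)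
    (hz₀ : M ≤ u z₀) (hstrip : ∀ w ∈ sphere z₀ (36 * δ), δ < |w.im| → u w ≤ M / 2) :
    ∃ w ∈ sphere z₀ (36 * δ), 2 * M ≤ u w := by
  by_contra! hlt
  set c : ℝ → ℂ := fun φ => z₀ + ((36 * δ : ℝ) : ℂ) * Complex.exp (φ * Complex.I)
  have hc : ∀ φ, c φ ∈ sphere z₀ (36 * δ) := fun φ => by
    simp [c, Complex.norm_exp_ofReal_mul_I, abs_of_pos hδ]
  have hcim : ∀ φ, (c φ).im = z₀.im + 36 * δ * sin φ := fun φ => by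
    simp [c, Complex.exp_ofReal_mul_I_im, Complex.exp_ofReal_mul_I_re]
  set bad := {φ : ℝ | |z₀.im + 36 * δ * sin φ| ≤ δ}
  have hbad : MeasurableSet bad := (isClosed_le (by fun_prop) continuous_const).measurableSet
  have hV : volume.real (bad ∩ Ioc 0 (2 * π)) ≤ π / 2 := by
    have h6 : √(δ / (36 * δ)) = 1 / 6 := by
      rw [show δ / (36 * δ) = (1 / 6) ^ 2 by field_simp; norm_num, Real.sqrt_sq (by norm_num)]
    refine ENNReal.toReal_le_of_le_ofReal (by positivity) ?_
    convert volume_setOf_abs_add_mul_sin_le_le (a := z₀.im) (δ := δ)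
      (by positivity : 0 < 36 * δ) using 2
    rw [h6]; ring
  have hle : ∀ φ, u (c φ) ≤ M / 2 + bad.indicator (fun _ => 3 * M / 2) φ := by
    intro φ
    by_cases hφ : φ ∈ bad
    · rw [indicator_of_mem hφ]
      linarith [hlt _ (hc φ)]
    · rw [indicator_of_notMem hφ, add_zero]
      exact hstrip _ (hc φ) (by rw [hcim]; simpa [bad] using hφ)
  have hmean := hu.le_of_le_add_indicator (by positivity) hball hbad (by positivity)
    (by positivity) hV hle
  have : 3 * M / 2 * (π / 2) / (2 * π) = 3 * M / 8 := by field_simp; ring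
  linarith

theorem IsSubharmonicOn.exists_dist_le_two_pow_mul_le {u : ℂ → ℝ} {D : Set ℂ} {z : ℂ}
    {C m R : ℝ} (hu : IsSubharmonicOn u D) (hC : 0 < C) (hm : 0 < m) (hR : 0 < R)
    (hball : closedBall z R ⊆ D)
    (hbd : ∀ w ∈ closedBall z R, w.im ≠ 0 → u w ≤ C * |w.im| ^ (-m))
    (hz : 2 * C * ((1 - 2 ^ (-m⁻¹)) * R / 36) ^ (-m) ≤ u z) (n : ℕ) :
    ∃ w, dist w z ≤ R * (1 - ((2 : ℝ) ^ (-m⁻¹)) ^ n) ∧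
      2 ^ n * (2 * C * ((1 - 2 ^ (-m⁻¹)) * R / 36) ^ (-m)) ≤ u w := by
  set q : ℝ := 2 ^ (-m⁻¹)
  have hq0 : 0 < q := by positivity
  have hq1 : q < 1 := rpow_lt_one_of_one_lt_of_neg one_lt_two (by simpa using hm)
  have hq2 : ∀ k : ℕ, (q ^ k) ^ (-m) = 2 ^ k := fun k => by
    rw [← rpow_natCast, ← rpow_mul hq0.le, ← rpow_mul zero_le_two, ← rpow_natCast,
      show -m⁻¹ * ((k : ℝ) * -m) = k by field_simp]
  set δ := (1 - q) * R / 36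
  have hδ : 0 < δ := by have := sub_pos.2 hq1; positivity
  set M := 2 * C * δ ^ (-m)
  -- The radii `36 δ qⁿ` sum to `R`, and the values of `u` double at each step.
  induction n with
  | zero => exact ⟨z, by simp, by simpa using hz⟩
  | succ n ih =>
    obtain ⟨w, hwz, hw⟩ := ih
    have hδn : 0 < δ * q ^ n := by positivity
    have hdist : dist w z + 36 * (δ * q ^ n) ≤ R * (1 - q ^ (n + 1)) := by
      rw [show 36 * (δ * q ^ n) = R * (1 - q) * q ^ n by ring, pow_succ]; linarith
    have hsub : closedBall w (36 * (δ * q ^ n)) ⊆ closedBall z R :=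
      closedBall_subset_closedBall' <| by
        nlinarith [mul_nonneg hR.le (pow_nonneg hq0.le (n + 1))]
    obtain ⟨w', hw'w, hw'⟩ := hu.exists_two_mul_le_on_sphere hδn (by positivity)
      (hsub.trans hball) hw fun v hv hvim => by
        calc u v ≤ C * |v.im| ^ (-m) :=
              hbd v (hsub (sphere_subset_closedBall hv)) (abs_pos.1 (hδn.trans hvim))
          _ ≤ C * (δ * q ^ n) ^ (-m) :=
              mul_le_mul_of_nonneg_left (rpow_le_rpow_of_nonpos hδn hvim.le (by linarith)) hC.le
          _ = 2 ^ n * M / 2 := by rw [mul_rpow hδ.le (by positivity), hq2]; ring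
    refine ⟨w', ?_, by rw [pow_succ]; linarith⟩
    calc dist w' z ≤ dist w' w + dist w z := dist_triangle _ _ _
      _ ≤ R * (1 - q ^ (n + 1)) := by rw [mem_sphere.1 hw'w, add_comm]; exact hdist

theorem IsSubharmonicOn.le_of_forall_le_abs_im_rpow {u : ℂ → ℝ} {D : Set ℂ} {z : ℂ} {C m R : ℝ}
    (hu : IsSubharmonicOn u D) (hC : 0 < C) (hm : 0 < m) (hR : 0 < R)
    (hball : closedBall z R ⊆ D)
    (hbd : ∀ w ∈ closedBall z R, w.im ≠ 0 → u w ≤ C * |w.im| ^ (-m)) :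
    u z ≤ 2 * C * ((1 - 2 ^ (-m⁻¹)) * R / 36) ^ (-m) := by
  have hq1 : (2 : ℝ) ^ (-m⁻¹) < 1 := rpow_lt_one_of_one_lt_of_neg one_lt_two (by simpa using hm)
  set M := 2 * C * ((1 - 2 ^ (-m⁻¹)) * R / 36) ^ (-m)
  have hM : 0 < M := by have := sub_pos.2 hq1; positivity
  by_contra! hz
  obtain ⟨T, hT⟩ := (hu.1.mono hball).bddAbove_of_isCompact (isCompact_closedBall z R)
  obtain ⟨n, hn⟩ := pow_unbounded_of_one_lt (T / M) one_lt_two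
  obtain ⟨w, hwz, hw⟩ := hu.exists_dist_le_two_pow_mul_le hC hm hR hball hbd hz.le n
  have hwR : w ∈ closedBall z R :=
    mem_closedBall.2 (hwz.trans (by nlinarith [pow_pos (by positivity : (0 : ℝ) < 2 ^ (-m⁻¹)) n]))
  have hwT := hT (mem_image_of_mem u hwR)
  rw [div_lt_iff₀ hM] at hn
  linarith

theorem closedBall_norm_div_two_subset {E : Type*} [NormedAddCommGroup E] {z : E} (hz0 : z ≠ 0)
    (hz : ‖z‖ ≤ 1 / 2) : closedBall z (‖z‖ / 2) ⊆ ball 0 1 \ {0} := by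
  intro w hw
  have hwz := mem_closedBall.1 hw
  have hzpos : 0 < ‖z‖ := norm_pos_iff.2 hz0
  refine ⟨mem_ball_zero_iff.2 ?_, fun h0 => ?_⟩
  · linarith [norm_le_norm_add_norm_sub' w z, dist_eq_norm w z]
  · rw [mem_singleton_iff.1 h0, dist_zero_left] at hwz
    linarith

theorem IsSubharmonicOn.exists_le_mul_norm_rpow_of_norm_le_half {u : ℂ → ℝ} {C m : ℝ}
    (hu : IsSubharmonicOn u (ball 0 1 \ {0})) (hC : 0 < C) (hm : 0 < m)
    (hbd : ∀ z ∈ ball (0:ℂ) 1, z ≠ 0 → u z ≤ C * |z.im| ^ (-m)) :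
    ∃ K > 0, ∀ z : ℂ, z ≠ 0 → ‖z‖ ≤ 1 / 2 → u z ≤ K * ‖z‖ ^ (-m) := by
  have hq : 0 < 1 - (2 : ℝ) ^ (-m⁻¹) :=
    sub_pos.2 (rpow_lt_one_of_one_lt_of_neg one_lt_two (by simpa using hm))
  refine ⟨2 * C * ((1 - 2 ^ (-m⁻¹)) / 72) ^ (-m), by positivity, fun z hz0 hz => ?_⟩
  have hball := closedBall_norm_div_two_subset hz0 hz
  calc u z ≤ 2 * C * ((1 - 2 ^ (-m⁻¹)) * (‖z‖ / 2) / 36) ^ (-m) :=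
        hu.le_of_forall_le_abs_im_rpow hC hm (by positivity) hball
          fun w hw hw0 => hbd w (hball hw).1 fun h => hw0 (by simp [h])
    _ = 2 * C * ((1 - 2 ^ (-m⁻¹)) / 72) ^ (-m) * ‖z‖ ^ (-m) := by
        rw [show (1 - (2 : ℝ) ^ (-m⁻¹)) * (‖z‖ / 2) / 36 = (1 - 2 ^ (-m⁻¹)) / 72 * ‖z‖ by ring,
          mul_rpow (by positivity) (norm_nonneg z)]
        ring

end

theorem domar_variant_general (U : Set ℂ) (hU1 : closedBall (0:ℂ) 1 ⊆ U)
    (u : ℂ → ℝ) (C m : ℝ) (hC : 0 < C)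
    (hsub : IsSubharmonicOn u (U \ {0}))
    (hbd : ∀ z ∈ ball (0:ℂ) 1, z ≠ 0 → u z ≤ C * |z.im| ^ (-m)) :
    ∃ C' : ℝ, 0 < C' ∧ ∀ z ∈ ball (0:ℂ) 1, z ≠ 0 → u z ≤ C' * ‖z‖ ^ (-m) := by
  rcases le_or_gt m 0 with hm | hm
  · refine ⟨C, hC, fun z hz hz0 => (hbd z hz hz0).trans ?_⟩
    gcongr
    · linarith
    · exact Complex.abs_im_le_norm z
  obtain ⟨K, hK, hnear⟩ := (hsub.mono (sdiff_subset_sdiff_left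
    (ball_subset_closedBall.trans hU1))).exists_le_mul_norm_rpow_of_norm_le_half hC hm hbd
  have hannulus : closedBall (0:ℂ) 1 \ ball 0 (1 / 2) ⊆ U \ {0} := fun z hz =>
    ⟨hU1 hz.1, fun h0 => hz.2 (by simp [mem_singleton_iff.1 h0])⟩
  obtain ⟨B, hB⟩ := (hsub.1.mono hannulus).bddAbove_of_isCompact
    ((isCompact_closedBall _ _).diff isOpen_ball)
  refine ⟨max B K, lt_max_of_lt_right hK, fun z hz hz0 => ?_⟩
  rcases le_or_gt ‖z‖ (1 / 2) with hz2 | hz2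
  · calc u z ≤ K * ‖z‖ ^ (-m) := hnear z hz0 hz2
      _ ≤ max B K * ‖z‖ ^ (-m) := by gcongr; exact le_max_right _ _
  · have hzm : 1 ≤ ‖z‖ ^ (-m) := Real.one_le_rpow_of_pos_of_le_one_of_nonpos
      (norm_pos_iff.2 hz0) (mem_ball_zero_iff.1 hz).le (by linarith)
    calc u z ≤ B := hB (mem_image_of_mem u ⟨ball_subset_closedBall hz, by simpa using hz2.le⟩)
      _ ≤ max B K := le_max_left _ _
      _ ≤ max B K * ‖z‖ ^ (-m) := le_mul_of_one_le_right (hK.le.trans (le_max_right _ _)) hzm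

/-- **A variant of Domar's lemma.** If `u ≥ 0` is subharmonic on `U ∖ {0}`, where `U` is an
open neighbourhood of the closed unit disc, and `u(z) ≤ C |Im z|^{-m}` on the punctured open
unit disc, then `u(z) ≤ C' |z|^{-m}` there for some constant `C'`. -/
theorem domar_variant (U : Set ℂ) (hU : IsOpen U) (hU1 : closedBall (0:ℂ) 1 ⊆ U)
    (u : ℂ → ℝ) (C m : ℝ) (hC : 0 < C) (hm : 0 ≤ m)
    (hsub : IsSubharmonicOn u (U \ {0}))
    (hpos : ∀ z ∈ U \ {0}, 0 ≤ u z)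
    (hbd : ∀ z ∈ ball (0:ℂ) 1, z ≠ 0 → u z ≤ C * |z.im| ^ (-m)) :
    ∃ C' : ℝ, 0 < C' ∧ ∀ z ∈ ball (0:ℂ) 1, z ≠ 0 → u z ≤ C' * ‖z‖ ^ (-m) :=
  domar_variant_general U hU1 u C m hC hsub hbd
end
end

section
/- Let X be a complex Banach space, let c ≥ 0, and let f : ℂ → X be an entire (everywhere holomorphic) function satisfying ‖f(z)‖ ≤ c/|Re z| for every z ∈ ℂ with Re z ≠ 0. Then f = 0. -/
/-!
Multiplying by `z ^ 2 + R ^ 2` removes the singularity of the bound: on the circle `‖z‖ = R`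
one has `z ^ 2 + R ^ 2 = 2 (Re z) z`, so `g z = (z ^ 2 + R ^ 2) • f z` satisfies `‖g‖ ≤ 2 c R`
there, hence on the whole disc by the maximum modulus principle. For fixed `w` this gives
`‖f w‖ ≤ 2 c R / (R ^ 2 - ‖w‖ ^ 2)`, which tends to `0` as `R → ∞`.
-/

open Complex Metric Filter

theorem Complex.sq_add_norm_sq_eq_two_re_mul (z : ℂ) :
    z ^ 2 + (‖z‖ : ℂ) ^ 2 = 2 * z.re * z := by
  rw [← mul_conj', sq, ← mul_add, add_conj]
  push_cast
  ring

section ReBound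

variable {X : Type*} [NormedAddCommGroup X] [NormedSpace ℂ X] {c : ℝ} {f : ℂ → X}

theorem norm_sq_add_norm_sq_smul_le_of_re_bound (hc : 0 ≤ c)
    (hbound : ∀ z : ℂ, z.re ≠ 0 → ‖f z‖ ≤ c / |z.re|) (z : ℂ) :
    ‖(z ^ 2 + (‖z‖ : ℂ) ^ 2) • f z‖ ≤ 2 * c * ‖z‖ := by
  rw [Complex.sq_add_norm_sq_eq_two_re_mul, norm_smul, norm_mul, norm_mul, Complex.norm_real,
    Real.norm_eq_abs, Complex.norm_two]
  rcases eq_or_ne z.re 0 with hre | hre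
  · simp only [hre, abs_zero, mul_zero, zero_mul]
    positivity
  · calc 2 * |z.re| * ‖z‖ * ‖f z‖ ≤ 2 * |z.re| * ‖z‖ * (c / |z.re|) := by
          gcongr
          exact hbound z hre
      _ = 2 * c * ‖z‖ := by field_simp

theorem norm_sq_add_sq_smul_le_of_re_bound (hc : 0 ≤ c) (hf : Differentiable ℂ f)
    (hbound : ∀ z : ℂ, z.re ≠ 0 → ‖f z‖ ≤ c / |z.re|) {R : ℝ} (hR : 0 < R) {w : ℂ}
    (hw : ‖w‖ ≤ R) : ‖(w ^ 2 + (R : ℂ) ^ 2) • f w‖ ≤ 2 * c * R := by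
  have hdiff : Differentiable ℂ fun z : ℂ ↦ (z ^ 2 + (R : ℂ) ^ 2) • f z := by fun_prop
  refine Complex.norm_le_of_forall_mem_frontier_norm_le isBounded_ball hdiff.diffContOnCl
    (fun z hz ↦ ?_) (by rwa [closure_ball 0 hR.ne', mem_closedBall_zero_iff])
  rw [frontier_ball 0 hR.ne', mem_sphere_zero_iff_norm] at hz
  subst hz
  exact norm_sq_add_norm_sq_smul_le_of_re_bound hc hbound z

theorem norm_le_of_re_bound (hc : 0 ≤ c) (hf : Differentiable ℂ f)
    (hbound : ∀ z : ℂ, z.re ≠ 0 → ‖f z‖ ≤ c / |z.re|) {R : ℝ} (hR : 0 < R) {w : ℂ}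
    (hw : 2 * ‖w‖ ≤ R) : ‖f w‖ ≤ 4 * c / R := by
  have hmax := norm_sq_add_sq_smul_le_of_re_bound hc hf hbound hR (by linarith [norm_nonneg w])
  rw [norm_smul] at hmax
  have hlower : R ^ 2 - ‖w‖ ^ 2 ≤ ‖w ^ 2 + (R : ℂ) ^ 2‖ :=
    calc R ^ 2 - ‖w‖ ^ 2 = ‖(R : ℂ) ^ 2‖ - ‖w ^ 2‖ := by simp [abs_of_pos hR]
      _ ≤ ‖(R : ℂ) ^ 2 + w ^ 2‖ := norm_sub_le_norm_add _ _
      _ = ‖w ^ 2 + (R : ℂ) ^ 2‖ := by rw [add_comm]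
  have hhalf : R ^ 2 / 2 * ‖f w‖ ≤ 2 * c * R :=
    calc R ^ 2 / 2 * ‖f w‖ ≤ (R ^ 2 - ‖w‖ ^ 2) * ‖f w‖ := by
          gcongr
          nlinarith [norm_nonneg w]
      _ ≤ ‖w ^ 2 + (R : ℂ) ^ 2‖ * ‖f w‖ := by gcongr
      _ ≤ 2 * c * R := hmax
  rw [le_div_iff₀ hR]
  nlinarith

end ReBound

theorem entire_vanishes_of_re_bound_general (X : Type*) [NormedAddCommGroup X] [NormedSpace ℂ X]
    (c : ℝ) (hc : 0 ≤ c) (f : ℂ → X)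
    (hf : Differentiable ℂ f)
    (hbound : ∀ z : ℂ, z.re ≠ 0 → ‖f z‖ ≤ c / |z.re|) :
    f = 0 := by
  funext w
  rw [Pi.zero_apply, ← norm_le_zero_iff]
  refine ge_of_tendsto ((tendsto_const_nhds (x := 4 * c)).div_atTop tendsto_id) ?_
  filter_upwards [eventually_gt_atTop 0, eventually_ge_atTop (2 * ‖w‖)] with R hR hwR
  exact norm_le_of_re_bound hc hf hbound hR hwR

/-- An entire Banach-space-valued function satisfying `‖f(z)‖ ≤ c/|Re z|` off the imaginary
axis vanishes identically. -/
theorem entire_vanishes_of_re_bound (X : Type*) [NormedAddCommGroup X] [NormedSpace ℂ X]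
    [CompleteSpace X] (c : ℝ) (hc : 0 ≤ c) (f : ℂ → X)
    (hf : Differentiable ℂ f)
    (hbound : ∀ z : ℂ, z.re ≠ 0 → ‖f z‖ ≤ c / |z.re|) :
    f = 0 :=
  entire_vanishes_of_re_bound_general X c hc f hf hbound
end

section
/- Let p ≥ 1 and let u be a non-negative subharmonic function on the open unit disc 𝔻 such that the L^p means satisfy ‖u(re^{i·})‖_{L^p[0,2π]} = o((1-r)^{-2+1/p}) as r → 1-. Then M_r(u) = o((1-r)^{-2}) as r → 1-. -/
/-!
Fix `r` close to `1`, put `δ = (1 - r) / 2` and `z = r e^{iφ}`. By Jensen's inequality `u ^ p`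
inherits the sub-mean value inequality on circles around `z`, so integrating in polar coordinates
around `z` gives `π δ² u(z)^p ≤ ∫_{B(z,δ)} u^p`. The disc `B(z,δ)` lies in the annulus
`r - δ ≤ |w| ≤ r + δ`; integrating in polar coordinates around `0`, the integral of `u^p` over
the annulus is at most `2δ · sup_{|s-r| ≤ δ} ∫₀^{2π} u(s e^{iθ})^p dθ = o(δ^{2-2p})`.
Hence `u(z)^p = o(δ^{-2p})`.
-/

open Set Filter Metric MeasureTheory

noncomputable section

open scoped Real ENNReal

theorem UpperSemicontinuousOn.measurable_indicator_s17 {α β : Type*} [TopologicalSpace α]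
    [MeasurableSpace α] [OpensMeasurableSpace α] [TopologicalSpace β] [MeasurableSpace β]
    [BorelSpace β] [LinearOrder β] [OrderTopology β] [SecondCountableTopology β] [Zero β]
    {f : α → β} {s : Set α} (hs : MeasurableSet s) (hf : UpperSemicontinuousOn f s) :
    Measurable (s.indicator f) := by
  refine measurable_of_restrict_of_restrict_compl hs ?_ ?_
  · have : s.domRestrict (s.indicator f) = s.domRestrict f :=
      funext fun x => indicator_of_mem x.2 f
    rw [this]
    exact (upperSemicontinuousOn_iff_restrict.2 hf).measurable
  · have : sᶜ.domRestrict (s.indicator f) = fun _ => 0 :=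
      funext fun x => indicator_of_notMem x.2 f
    rw [this]
    exact measurable_const

theorem circleIntegrable_of_abs_le {f : ℂ → ℝ} (hf : Measurable f) {M : ℝ}
    (hfM : ∀ w, |f w| ≤ M) (c : ℂ) (R : ℝ) : CircleIntegrable f c R :=
  (intervalIntegrable_const (c := M)).mono_fun'
    (hf.comp (continuous_circleMap c R).measurable).aestronglyMeasurable
    (ae_of_all _ fun _ => hfM _)

theorem circleIntegrable_rpow_of_le {v : ℂ → ℝ} (hv : Measurable v) (hv0 : 0 ≤ v) {M : ℝ}
    (hvM : ∀ w, v w ≤ M) {p : ℝ} (hp : 0 ≤ p) (c : ℂ) (R : ℝ) :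
    CircleIntegrable (fun w => v w ^ p) c R :=
  circleIntegrable_of_abs_le (hv.pow_const p)
    (fun w => (abs_of_nonneg (Real.rpow_nonneg (hv0 w) p)).trans_le
      (Real.rpow_le_rpow (hv0 w) (hvM w) hp)) c R

theorem circleAverage_rpow_le {f : ℂ → ℝ} {c : ℂ} {R p : ℝ} (hp : 1 ≤ p)
    (hf0 : ∀ w ∈ sphere c |R|, 0 ≤ f w) (hf : CircleIntegrable f c R)
    (hfp : CircleIntegrable (fun w => f w ^ p) c R) :
    Real.circleAverage f c R ^ p ≤ Real.circleAverage (fun w => f w ^ p) c R := by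
  simp only [Real.circleAverage_eq_intervalAverage]
  refine (convexOn_rpow hp).map_set_average_le
    (continuousOn_id.rpow_const fun _ _ => by right; linarith) isClosed_Ici ?_ ?_
    (ae_of_all _ fun θ => hf0 _ (circleMap_mem_sphere' c R θ)) hf.def' hfp.def'
  · simp [uIoc_of_le Real.two_pi_pos.le, Real.pi_pos]
  · exact (uIoc_of_le Real.two_pi_pos.le ▸ measure_Ioc_lt_top).ne

theorem setLIntegral_Ioo_circleMap_eq_ofReal_integral {f : ℂ → ℝ} {c : ℂ} {R : ℝ}
    (hf : CircleIntegrable f c R) (hf0 : ∀ θ, 0 ≤ f (circleMap c R θ)) :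
    ∫⁻ θ in Ioo (-π) π, ENNReal.ofReal (f (circleMap c R θ)) =
      ENNReal.ofReal (∫ θ in 0..2 * π, f (circleMap c R θ)) := by
  have hper : Function.Periodic (fun θ => f (circleMap c R θ)) (2 * π) :=
    (periodic_circleMap c R).comp f
  have hint : IntervalIntegrable (fun θ => f (circleMap c R θ)) volume (-π) π :=
    hper.intervalIntegrable (t := 0) (by positivity) (by rw [zero_add]; exact hf) _ _
  rw [← ofReal_integral_eq_lintegral_ofReal (hint.1.mono_set Ioo_subset_Ioc_self)
    (ae_of_all _ hf0), ← integral_Ioc_eq_integral_Ioo,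
    ← intervalIntegral.integral_of_le (by linarith [Real.pi_pos])]
  have hshift := hper.intervalIntegral_add_eq (-π) 0
  rw [show -π + 2 * π = π by ring, zero_add] at hshift
  rw [hshift]

theorem setLIntegral_preimage_dist_eq {f : ℂ → ℝ} (hf : Measurable f) (hf0 : 0 ≤ f) {c : ℂ}
    (hfi : ∀ ρ, CircleIntegrable f c ρ) {S : Set ℝ} (hS : MeasurableSet S) :
    ∫⁻ w in (dist · c) ⁻¹' S, ENNReal.ofReal (f w) =
      ∫⁻ ρ in S ∩ Ioi 0, ENNReal.ofReal (ρ * ∫ θ in 0..2 * π, f (circleMap c ρ θ)) := by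
  set D := (dist · c) ⁻¹' S
  have hD : MeasurableSet D := (continuous_id.dist continuous_const).measurable hS
  set F : ℂ → ℝ≥0∞ := D.indicator fun w => ENNReal.ofReal (f w)
  have hpolar : ∀ q : ℝ × ℝ, c + Complex.polarCoord.symm q = circleMap c q.1 q.2 := by
    rintro ⟨ρ, θ⟩
    simp [circleMap, Complex.exp_mul_I, ← Complex.ofReal_cos, ← Complex.ofReal_sin]
  have hcircle : ∀ ρ > 0, ∀ θ, F (circleMap c ρ θ) =
      S.indicator (fun _ => ENNReal.ofReal (f (circleMap c ρ θ))) ρ := by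
    intro ρ hρ θ
    have : circleMap c ρ θ ∈ D ↔ ρ ∈ S := by
      simp [D, dist_eq_norm, circleMap_sub_center, abs_of_pos hρ]
    by_cases hρS : ρ ∈ S
    · rw [indicator_of_mem hρS]
      exact indicator_of_mem (this.2 hρS) _
    · rw [indicator_of_notMem hρS]
      exact indicator_of_notMem (mt this.1 hρS) _
  calc ∫⁻ w in D, ENNReal.ofReal (f w) = ∫⁻ w, F (c + w) := by
        rw [lintegral_add_left_eq_self F c, lintegral_indicator hD]
    _ = ∫⁻ q in polarCoord.target, ENNReal.ofReal q.1 * F (circleMap c q.1 q.2) := by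
        rw [← Complex.lintegral_comp_polarCoord_symm]
        simp only [hpolar, smul_eq_mul]
    _ = ∫⁻ ρ in Ioi 0, ∫⁻ θ in Ioo (-π) π, ENNReal.ofReal ρ * F (circleMap c ρ θ) := by
        rw [polarCoord_target, Measure.volume_eq_prod, ← Measure.prod_restrict, lintegral_prod]
        fun_prop
    _ = ∫⁻ ρ in Ioi 0, S.indicator
          (fun ρ => ENNReal.ofReal (ρ * ∫ θ in 0..2 * π, f (circleMap c ρ θ))) ρ := by
        refine setLIntegral_congr_fun measurableSet_Ioi fun ρ hρ => ?_
        simp only [hcircle ρ hρ]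
        by_cases hρS : ρ ∈ S
        · simp only [indicator_of_mem hρS]
          rw [lintegral_const_mul _ (by fun_prop),
            setLIntegral_Ioo_circleMap_eq_ofReal_integral (hfi ρ) fun θ => hf0 _,
            ENNReal.ofReal_mul hρ.le]
        · simp [indicator_of_notMem hρS]
    _ = _ := setLIntegral_indicator hS _

theorem ofReal_mul_rpow_le_setLIntegral_closedBall {v : ℂ → ℝ} (hv : Measurable v) (hv0 : 0 ≤ v)
    {M : ℝ} (hvM : ∀ w, v w ≤ M) {p : ℝ} (hp : 1 ≤ p) {z : ℂ} {δ : ℝ} (hδ : 0 ≤ δ)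
    (hsub : ∀ ρ ∈ Ioc 0 δ, v z ≤ Real.circleAverage v z ρ) :
    ENNReal.ofReal (π * δ ^ 2 * v z ^ p) ≤ ∫⁻ w in closedBall z δ, ENNReal.ofReal (v w ^ p) := by
  have hvp0 : 0 ≤ fun w => v w ^ p := fun w => Real.rpow_nonneg (hv0 w) p
  have hvi : ∀ ρ, CircleIntegrable v z ρ :=
    circleIntegrable_of_abs_le hv (fun w => (abs_of_nonneg (hv0 w)).trans_le (hvM w)) z
  have hvpi := circleIntegrable_rpow_of_le hv hv0 hvM (p := p) (by linarith) z
  have hcircle : ∀ ρ ∈ Ioc 0 δ, 2 * π * v z ^ p ≤ ∫ θ in 0..2 * π, v (circleMap z ρ θ) ^ p := by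
    intro ρ hρ
    have hjensen := circleAverage_rpow_le hp (fun w _ => hv0 w) (hvi ρ) (hvpi ρ)
    have hpow := Real.rpow_le_rpow (hv0 z) (hsub ρ hρ) (by linarith : (0:ℝ) ≤ p)
    rw [Real.circleAverage_def, smul_eq_mul] at hjensen
    rw [← le_inv_mul_iff₀ Real.two_pi_pos]
    exact hpow.trans hjensen
  rw [show closedBall z δ = (dist · z) ⁻¹' Iic δ from rfl,
    setLIntegral_preimage_dist_eq (hv.pow_const p) hvp0 hvpi measurableSet_Iic, Iic_inter_Ioi]
  calc ENNReal.ofReal (π * δ ^ 2 * v z ^ p)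
      = ∫⁻ ρ in Ioc 0 δ, ENNReal.ofReal (ρ * (2 * π * v z ^ p)) := by
        rw [← ofReal_integral_eq_lintegral_ofReal, ← intervalIntegral.integral_of_le hδ,
          intervalIntegral.integral_mul_const, integral_id]
        · ring_nf
        · exact (continuous_id.mul continuous_const).integrableOn_Ioc
        · exact ae_restrict_of_forall_mem measurableSet_Ioc fun ρ hρ =>
            mul_nonneg hρ.1.le (mul_nonneg Real.two_pi_pos.le (hvp0 z))
    _ ≤ _ := setLIntegral_mono' measurableSet_Ioc fun ρ hρ =>
        ENNReal.ofReal_le_ofReal (mul_le_mul_of_nonneg_left (hcircle ρ hρ) hρ.1.le)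

theorem setLIntegral_preimage_dist_Icc_le {f : ℂ → ℝ} (hf : Measurable f) (hf0 : 0 ≤ f) {c : ℂ}
    (hfi : ∀ ρ, CircleIntegrable f c ρ) {a b K : ℝ} (hab : a ≤ b)
    (hK : ∀ s ∈ Icc a b, 0 < s → s * ∫ θ in 0..2 * π, f (circleMap c s θ) ≤ K) :
    ∫⁻ w in (dist · c) ⁻¹' Icc a b, ENNReal.ofReal (f w) ≤ ENNReal.ofReal ((b - a) * K) := by
  rw [setLIntegral_preimage_dist_eq hf hf0 hfi measurableSet_Icc]
  calc _ ≤ ∫⁻ s in Icc a b ∩ Ioi 0, ENNReal.ofReal K :=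
        setLIntegral_mono' (measurableSet_Icc.inter measurableSet_Ioi) fun s hs =>
          ENNReal.ofReal_le_ofReal (hK s hs.1 hs.2)
    _ ≤ ∫⁻ s in Icc a b, ENNReal.ofReal K := lintegral_mono_set inter_subset_left
    _ = ENNReal.ofReal ((b - a) * K) := by
        rw [setLIntegral_const, Real.volume_Icc, ENNReal.ofReal_mul (sub_nonneg.2 hab), mul_comm]

theorem pi_mul_mul_rpow_le_of_integral_circleMap_le {v : ℂ → ℝ} (hv : Measurable v) (hv0 : 0 ≤ v)
    {M : ℝ} (hvM : ∀ w, v w ≤ M) {p : ℝ} (hp : 1 ≤ p) {z : ℂ} {δ K : ℝ} (hδ : 0 < δ)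
    (hsub : ∀ ρ ∈ Ioc 0 δ, v z ≤ Real.circleAverage v z ρ)
    (hK : ∀ s ∈ Icc (‖z‖ - δ) (‖z‖ + δ), 0 < s →
      s * ∫ θ in 0..2 * π, v (circleMap 0 s θ) ^ p ≤ K) :
    π * δ * v z ^ p ≤ 2 * K := by
  have hvp0 : 0 ≤ fun w => v w ^ p := fun w => Real.rpow_nonneg (hv0 w) p
  have hvpi := circleIntegrable_rpow_of_le hv hv0 hvM (p := p) (by linarith) 0
  have hK0 : 0 ≤ K := by
    refine le_trans ?_ (hK (‖z‖ + δ) ⟨by linarith, le_rfl⟩ (by positivity))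
    exact mul_nonneg (by positivity)
      (intervalIntegral.integral_nonneg Real.two_pi_pos.le fun θ _ => hvp0 _)
  have hball : closedBall z δ ⊆ (dist · 0) ⁻¹' Icc (‖z‖ - δ) (‖z‖ + δ) := by
    intro w hw
    have := (abs_norm_sub_norm_le w z).trans (mem_closedBall_iff_norm.1 hw)
    simp only [mem_preimage, dist_zero_right, mem_Icc]
    constructor <;> linarith [abs_le.1 this]
  have hint : ENNReal.ofReal (π * δ ^ 2 * v z ^ p) ≤ ENNReal.ofReal ((‖z‖ + δ - (‖z‖ - δ)) * K) :=
    (ofReal_mul_rpow_le_setLIntegral_closedBall hv hv0 hvM hp hδ.le hsub).trans <|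
      (lintegral_mono_set hball).trans <|
        setLIntegral_preimage_dist_Icc_le (hv.pow_const p) hvp0 hvpi (by linarith) hK
  rw [ENNReal.ofReal_le_ofReal_iff (mul_nonneg (by linarith) hK0)] at hint
  nlinarith

theorem IsSubharmonicOn.le_circleAverage_s17 {u : ℂ → ℝ} {D : Set ℂ} (hu : IsSubharmonicOn u D)
    {z : ℂ} {ρ : ℝ} (hρ : 0 < ρ) (hzρ : closedBall z ρ ⊆ D) :
    u z ≤ Real.circleAverage u z ρ := by
  rw [Real.circleAverage_def, smul_eq_mul, ← one_div]
  exact hu.2 z ρ hρ hzρ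

theorem IsSubharmonicOn.pi_mul_mul_rpow_le {u : ℂ → ℝ} {D : Set ℂ} (hu : IsSubharmonicOn u D)
    (hpos : ∀ w ∈ D, 0 ≤ u w) {p : ℝ} (hp : 1 ≤ p) {z : ℂ} {δ K : ℝ} (hδ : 0 < δ)
    (hzD : closedBall 0 (‖z‖ + δ) ⊆ D)
    (hK : ∀ s ∈ Icc (‖z‖ - δ) (‖z‖ + δ), 0 < s →
      s * ∫ θ in 0..2 * π, u (circleMap 0 s θ) ^ p ≤ K) :
    π * δ * u z ^ p ≤ 2 * K := by
  -- All circles below lie in the compact disc `B`, on which `u` is bounded above and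
  -- `B.indicator u` is measurable.
  set B := closedBall (0 : ℂ) (‖z‖ + δ)
  have huB : UpperSemicontinuousOn u B := hu.1.mono hzD
  obtain ⟨M, hM⟩ := huB.bddAbove_of_isCompact (isCompact_closedBall 0 _)
  have hvu : EqOn (B.indicator u) u B := fun w hw => indicator_of_mem hw u
  have hzB : z ∈ B := mem_closedBall_zero_iff.2 (by linarith)
  have hcircle : ∀ s, 0 < s → s ≤ ‖z‖ + δ → ∀ θ, circleMap 0 s θ ∈ B := fun s hs0 hs θ => by
    rwa [mem_closedBall_zero_iff, norm_circleMap_zero, abs_of_pos hs0]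
  rw [← hvu hzB]
  refine pi_mul_mul_rpow_le_of_integral_circleMap_le
    (huB.measurable_indicator_s17 measurableSet_closedBall)
    (indicator_nonneg fun w hw => hpos w (hzD hw)) (M := max M 0)
    (fun w => indicator_apply_le' (fun hw => (hM (mem_image_of_mem u hw)).trans (le_max_left _ _))
      fun _ => le_max_right _ _) hp hδ (fun ρ hρ => ?_) fun s hs hs0 => ?_
  · have hρB : closedBall z ρ ⊆ B := closedBall_subset_closedBall' (by
      rw [dist_zero_right]; linarith [hρ.2])
    rw [hvu hzB, Real.circleAverage_congr_sphere (by
      rw [abs_of_pos hρ.1]; exact hvu.mono (sphere_subset_closedBall.trans hρB))]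
    exact hu.le_circleAverage_s17 hρ.1 (hρB.trans hzD)
  · refine le_of_eq_of_le ?_ (hK s hs hs0)
    congr 1
    refine intervalIntegral.integral_congr fun θ _ => ?_
    exact congrArg (· ^ p) (hvu (hcircle s hs0 hs.2 θ))

theorem le_mul_div_sq_rpow_of_rpow_one_div_le {X ε t δ p : ℝ} (hp : 1 / 2 ≤ p) (hX : 0 ≤ X)
    (hε : 0 ≤ ε) (hδ : 0 < δ) (hδt : δ ≤ t) (h : X ^ (1 / p) ≤ ε * t ^ (-2 + 1 / p)) :
    X ≤ δ * (ε / δ ^ 2) ^ p := by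
  have hp0 : 0 < p := by linarith
  have ht : 0 < t := hδ.trans_le hδt
  calc X = (X ^ (1 / p)) ^ p := by
        rw [← Real.rpow_mul hX, one_div_mul_cancel hp0.ne', Real.rpow_one]
    _ ≤ (ε * t ^ (-2 + 1 / p)) ^ p := Real.rpow_le_rpow (Real.rpow_nonneg hX _) h hp0.le
    _ = ε ^ p * t ^ (1 - 2 * p) := by
        rw [Real.mul_rpow hε (by positivity), ← Real.rpow_mul ht.le]
        congr 2
        field_simp
        ring
    _ ≤ ε ^ p * δ ^ (1 - 2 * p) := by
        have hexp : 1 - 2 * p ≤ 0 := by linarith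
        exact mul_le_mul_of_nonneg_left (Real.rpow_le_rpow_of_nonpos hδ hδt hexp) (by positivity)
    _ = δ * (ε / δ ^ 2) ^ p := by
        rw [Real.div_rpow hε (by positivity), ← Real.rpow_natCast, ← Real.rpow_mul hδ.le,
          Real.rpow_sub hδ, Real.rpow_one]
        push_cast
        field_simp

theorem le_of_pi_mul_mul_rpow_le {x T δ p : ℝ} (hp : 0 < p) (hx : 0 ≤ x) (hT : 0 ≤ T) (hδ : 0 < δ)
    (h : π * δ * x ^ p ≤ 2 * (δ * T ^ p)) : x ≤ T := by
  rw [← Real.rpow_le_rpow_iff hx hT hp]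
  have hπ : π * x ^ p ≤ 2 * T ^ p := le_of_mul_le_mul_left (by linarith) hδ
  nlinarith [Real.pi_gt_three, Real.rpow_nonneg hx p]

theorem mul_integral_circleMap_rpow_le {u : ℂ → ℝ} {p s ε δ : ℝ} (hp : 1 / 2 ≤ p)
    (hs0 : 0 < s) (hs1 : s ≤ 1) (hu : ∀ w ∈ sphere (0 : ℂ) s, 0 ≤ u w) (hε : 0 ≤ ε) (hδ : 0 < δ)
    (hδs : δ ≤ 1 - s)
    (h : (∫ θ in 0..2 * π, |u ((s : ℂ) * Complex.exp (θ * Complex.I))| ^ p) ^ (1 / p) ≤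
      ε * (1 - s) ^ (-2 + 1 / p)) :
    s * ∫ θ in 0..2 * π, u (circleMap 0 s θ) ^ p ≤ δ * (ε / δ ^ 2) ^ p := by
  have habs : ∫ θ in 0..2 * π, u (circleMap 0 s θ) ^ p =
      ∫ θ in 0..2 * π, |u ((s : ℂ) * Complex.exp (θ * Complex.I))| ^ p := by
    refine intervalIntegral.integral_congr fun θ _ => ?_
    have hθ := abs_of_pos hs0 ▸ circleMap_mem_sphere' 0 s θ
    rw [← circleMap_zero, abs_of_nonneg (hu _ hθ)]
  have hI0 : 0 ≤ ∫ θ in 0..2 * π, |u ((s : ℂ) * Complex.exp (θ * Complex.I))| ^ p :=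
    intervalIntegral.integral_nonneg Real.two_pi_pos.le fun θ _ => by positivity
  rw [habs]
  exact (mul_le_of_le_one_left hI0 hs1).trans <|
    le_mul_div_sq_rpow_of_rpow_one_div_le hp hI0 hε hδ hδs h

/-- If the `L^p` means of a non-negative subharmonic function `u` on the unit disc satisfy
`‖u(re^{i⬝})‖_p = o((1-r)^{-2+1/p})` as `r → 1-`, then `M_r(u) = o((1-r)^{-2})`. -/
theorem sup_growth_from_Lp_growth (p : ℝ) (hp : 1 ≤ p) (u : ℂ → ℝ)
    (hsub : IsSubharmonicOn u (ball (0:ℂ) 1))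
    (hpos : ∀ z ∈ ball (0:ℂ) 1, 0 ≤ u z)
    (hLp : ∀ ε > (0:ℝ), ∀ᶠ r : ℝ in nhdsWithin 1 (Iio 1),
      (∫ φ in (0:ℝ)..(2 * Real.pi),
          |u ((r : ℂ) * Complex.exp ((φ : ℂ) * Complex.I))| ^ p) ^ (1 / p) ≤
        ε * (1 - r) ^ (-2 + 1 / p)) :
    ∀ ε > (0:ℝ), ∀ᶠ r : ℝ in nhdsWithin 1 (Iio 1),
      ∀ φ : ℝ, |u ((r : ℂ) * Complex.exp ((φ : ℂ) * Complex.I))| ≤ ε * ((1 - r) ^ 2)⁻¹ := by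
  intro ε hε
  obtain ⟨a, ha1 : a < 1, haP⟩ := mem_nhdsLT_iff_exists_Ioo_subset.1 (hLp (ε / 4) (by positivity))
  filter_upwards [Ioo_mem_nhdsLT (max_lt one_pos (by linarith) : max 0 ((2 * a + 1) / 3) < 1)]
    with r ⟨hr, hr1⟩ φ
  obtain ⟨hr0, hra⟩ := max_lt_iff.1 hr
  set δ := (1 - r) / 2 with hδ_def
  have hδ : 0 < δ := by linarith
  have hz : ‖(r : ℂ) * Complex.exp (φ * Complex.I)‖ = r := by
    rw [← circleMap_zero, norm_circleMap_zero, abs_of_pos hr0]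
  have hz1 : (r : ℂ) * Complex.exp (φ * Complex.I) ∈ ball (0 : ℂ) 1 := by
    rw [mem_ball_zero_iff, hz]; exact hr1
  have key := hsub.pi_mul_mul_rpow_le hpos hp hδ (closedBall_subset_ball (by linarith))
    (K := δ * (ε / 4 / δ ^ 2) ^ p) fun s hs hs0 => by
      rw [hz] at hs
      exact mul_integral_circleMap_rpow_le (by linarith) hs0 (by linarith [hs.2])
        (fun w hw => hpos w (sphere_subset_ball (by linarith [hs.2]) hw)) (by positivity) hδ
        (by linarith [hs.2]) (haP ⟨by linarith [hs.1], by linarith [hs.2]⟩)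
  rw [abs_of_nonneg (hpos _ hz1)]
  calc u (r * Complex.exp (φ * Complex.I)) ≤ ε / 4 / δ ^ 2 :=
        le_of_pi_mul_mul_rpow_le (by linarith) (hpos _ hz1) (by positivity) hδ key
    _ = ε * ((1 - r) ^ 2)⁻¹ := by
        rw [hδ_def]
        field_simp
        ring
end
end
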